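/- In the automaton group of automaton 887, each of the generators a, b, c has order exactly 2. -/

import Mathlib

namespace Stmt11


/-- A Mealy automaton over the binary alphabet with state set `S`. -/
structure Mealy (S : Type) where
  /-- transition function -/
  δ : S → Bool → S
  /-- output function -/
  τ : S → Bool → Bool

namespace Mealy

variable {S : Type} (M : Mealy S)

/-- The state reached from `q` after reading the first `n` letters of `w`. -/
def stateAt (q : S) (w : ℕ → Bool) : ℕ → S
  | 0 => q
  | n + 1 => M.δ (stateAt q w n) (w n)

/-- The action of state `q` on infinite words. -/
def act (q : S) (w : ℕ → Bool) : ℕ → Bool :=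
  fun n => M.τ (M.stateAt q w n) (w n)

/-- The inverse automaton (for automata whose output functions are involutions). -/
def inv : Mealy S := ⟨fun q b => M.δ q (M.τ q b), M.τ⟩

theorem stateAt_inv_act (h : ∀ q b, M.τ q (M.τ q b) = b) (q : S) (w : ℕ → Bool) :
    ∀ n, M.inv.stateAt q (M.act q w) n = M.stateAt q w n := by
  intro n
  induction n with
  | zero => rfl
  | succ n ih =>
    show M.inv.δ (M.inv.stateAt q (M.act q w) n) (M.act q w n) = M.δ (M.stateAt q w n) (w n)
    rw [ih]
    show M.δ (M.stateAt q w n) (M.τ (M.stateAt q w n) (M.τ (M.stateAt q w n) (w n))) = _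
    rw [h]

theorem inv_act (h : ∀ q b, M.τ q (M.τ q b) = b) (q : S) (w : ℕ → Bool) :
    M.inv.act q (M.act q w) = w := by
  funext n
  show M.inv.τ (M.inv.stateAt q (M.act q w) n) (M.act q w n) = w n
  rw [stateAt_inv_act M h]
  show M.τ (M.stateAt q w n) (M.τ (M.stateAt q w n) (w n)) = w n
  rw [h]

theorem inv_inv (h : ∀ q b, M.τ q (M.τ q b) = b) : M.inv.inv = M := by
  obtain ⟨d, t⟩ := M
  simp only [inv]
  congr 1
  funext q b
  exact congrArg (d q) (h q b)

/-- The permutation of the set of infinite binary words defined by state `q`. -/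
def perm (h : ∀ q b, M.τ q (M.τ q b) = b) (q : S) : Equiv.Perm (ℕ → Bool) where
  toFun := M.act q
  invFun := M.inv.act q
  left_inv := fun w => M.inv_act h q w
  right_inv := fun w => by
    have h2 : ∀ q b, M.inv.τ q (M.inv.τ q b) = b := h
    have := M.inv.inv_act h2 q w
    rwa [M.inv_inv h] at this

end Mealy

/-- Prepend a finite word to an infinite word. -/
def cat (u : List Bool) (w : ℕ → Bool) : ℕ → Bool :=
  fun n => u.getD n (w (n - u.length))

/-- The (semantic) restriction of a transformation of infinite words to the
subtree indexed by the finite word `u`. -/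
def resW (f : (ℕ → Bool) → ℕ → Bool) (u : List Bool) : (ℕ → Bool) → ℕ → Bool :=
  fun w n => f (cat u w) (n + u.length)

/-- The periodic infinite word with period `u`. -/
def per (u : List Bool) : ℕ → Bool := fun n => u.getD (n % u.length) false

/-- Left-shift equivalence of infinite words: they share a common infinite tail. -/
def seq (u v : ℕ → Bool) : Prop := ∃ k l : ℕ, ∀ n, u (n + k) = v (n + l)

inductive St : Type
  | a | b | c
deriving DecidableEq

instance instFintypeSt : Fintype St :=
  ⟨⟨{St.a, St.b, St.c}, by decide⟩, fun x => by cases x <;> decide⟩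

/-- Automaton 887. -/
def M : Mealy St where
  δ := fun q x => match q, x with
    | .a, false => .b | .a, true => .b
    | .b, false => .c | .b, true => .c
    | .c, false => .b | .c, true => .a
  τ := fun q x => match q with
    | .a => !x
    | .b => x
    | .c => x

theorem M_inv : ∀ q x, M.τ q (M.τ q x) = x := by decide

/-- The automorphism of the binary tree boundary defined by state `a`. -/
def a : Equiv.Perm (ℕ → Bool) := M.perm M_inv .a

/-- The automorphism of the binary tree boundary defined by state `b`. -/
def b : Equiv.Perm (ℕ → Bool) := M.perm M_inv .b

/-- The automorphism of the binary tree boundary defined by state `c`. -/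
def c : Equiv.Perm (ℕ → Bool) := M.perm M_inv .c

/-! The only state with non-trivial output, `a`, sends both letters to the same state, so
relabelling the transitions by the outputs changes nothing: the automaton is its own inverse,
and each state acts as an involution. On the constant word `true` the run from `b` visits
`b, c, a` and the run from `c` visits `c, a`, so every state eventually flips a letter and none
acts trivially. -/

namespace Mealy

variable {S : Type} (M : Mealy S)

theorem inv_eq_self (hδ : ∀ q x, M.δ q (M.τ q x) = M.δ q x) : M.inv = M := by
  cases M
  simp only [inv, Mealy.mk.injEq, and_true]
  funext q x
  exact hδ q x

theorem perm_sq (h : ∀ q b, M.τ q (M.τ q b) = b) (hM : M.inv = M) (q : S) :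
    M.perm h q ^ 2 = 1 :=
  Equiv.ext fun w => by
    have := M.inv_act h q w
    rwa [hM] at this

theorem perm_ne_one (h : ∀ q b, M.τ q (M.τ q b) = b) {q : S} {w : ℕ → Bool} {n : ℕ}
    (hn : M.τ (M.stateAt q w n) (w n) ≠ w n) : M.perm h q ≠ 1 :=
  fun h1 => hn (congrFun (Equiv.ext_iff.mp h1 w) n)

theorem orderOf_perm_eq_two (h : ∀ q b, M.τ q (M.τ q b) = b)
    (hδ : ∀ q x, M.δ q (M.τ q x) = M.δ q x) {q : S} {w : ℕ → Bool} {n : ℕ}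
    (hn : M.τ (M.stateAt q w n) (w n) ≠ w n) : orderOf (M.perm h q) = 2 :=
  orderOf_eq_prime (M.perm_sq h (M.inv_eq_self hδ) q) (M.perm_ne_one h hn)

end Mealy

theorem M_δ_τ : ∀ q x, M.δ q (M.τ q x) = M.δ q x := by decide

/-- In the automaton group of automaton 887, each generator has order exactly `2`. -/
theorem automaton887_orders : orderOf a = 2 ∧ orderOf b = 2 ∧ orderOf c = 2 :=
  ⟨M.orderOf_perm_eq_two M_inv M_δ_τ (w := fun _ => true) (n := 0) (by decide),
    M.orderOf_perm_eq_two M_inv M_δ_τ (w := fun _ => true) (n := 2) (by decide),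
    M.orderOf_perm_eq_two M_inv M_δ_τ (w := fun _ => true) (n := 1) (by decide)⟩

end Stmt11
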